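/- Let Γ = (V, H, s, ι, σ) be a ribbon graph (H a finite set of half-edges, s : H → V, ι a fixed-point-free involution on H, σ a permutation of H whose orbits are the fibers of s). If the underlying multigraph, with edge set the orbits {h, ι(h)} of ι, is a tree (connected and acyclic), then the permutation ι ∘ σ of H is a single cycle of length |H|. -/

import Mathlib

/-!
The branch of a half-edge `h` is the set of vertices reachable from `s (ι h)` without crossing
the edge of `h`. In a tree every other half-edge `h'` at `s (ι h)` has a strictly smaller branch,
so by induction on its size, `ι ∘ σ` leads from `ι h'` back to `h'`. Starting at `ι h`, the walk
`ι ∘ σ` therefore runs through the `σ`-cycle of `ι h`, making one such excursion at each `h'`,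
until it reaches `ι (ι h) = h`. So `h` and `ι h` lie in one cycle of `ι ∘ σ`; since
`σ h = ι ((ι ∘ σ) h)`, so do `h` and `σ h`, and connectedness puts all half-edges into one cycle.
A fixed point of `ι ∘ σ` would be a loop.
-/

/-- A ribbon graph: a finite set `V` of vertices, a finite set `H` of half-edges,
an incidence map `s : H → V`, a fixed-point-free involution `ι` pairing half-edges into
edges, and a permutation `σ` whose orbits are exactly the fibers of `s`. -/
structure RibbonGraph (V H : Type) where
  s : H → V
  ι : Equiv.Perm H
  σ : Equiv.Perm H
  ι_invol : ∀ h, ι (ι h) = h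
  ι_ne : ∀ h, ι h ≠ h
  orbit_fiber : ∀ g h, σ.SameCycle g h ↔ s g = s h

/-- The underlying multigraph of a ribbon graph, as a simple graph: `v` is adjacent to `w`
iff some edge `{h, ι h}` joins them. -/
def RibbonGraph.underlying {V H : Type} (r : RibbonGraph V H) : SimpleGraph V :=
  SimpleGraph.fromRel (fun v w => ∃ h, r.s h = v ∧ r.s (r.ι h) = w)

/-- The underlying multigraph of the ribbon graph is a tree: the underlying simple graph is
connected and acyclic, there are no loops, and no two distinct edges have the same pair of
endpoints. -/
def RibbonGraph.IsTreeRibbon {V H : Type} (r : RibbonGraph V H) : Prop :=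
  r.underlying.IsTree ∧ (∀ h, r.s h ≠ r.s (r.ι h)) ∧
    ∀ g h, r.s g = r.s h → r.s (r.ι g) = r.s (r.ι h) → g = h ∨ g = r.ι h

open SimpleGraph

theorem SimpleGraph.IsAcyclic.reachable_deleteEdges_ssubset {V : Type*} {G : SimpleGraph V}
    (hG : G.IsAcyclic) {v w u : V} (hvw : G.Adj v w) (hwu : G.Adj w u) (huv : u ≠ v) :
    {x | (G.deleteEdges {s(w, u)}).Reachable u x} ⊂
      {x | (G.deleteEdges {s(v, w)}).Reachable w x} := by
  classical
  have hbridge : ¬ (G.deleteEdges {s(w, u)}).Reachable w u :=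
    isBridge_iff.mp (isAcyclic_iff_forall_adj_isBridge.mp hG hwu)
  refine ⟨fun x ⟨p⟩ => ?_, fun hsub => hbridge (hsub (Reachable.refl w)).symm⟩
  have hw : w ∉ p.support := fun hw => hbridge ⟨(p.takeUntil w hw).reverse⟩
  have hp : s(v, w) ∉ (p.map (.ofLE (G.deleteEdges_le _))).edges := fun he =>
    hw (by simpa using (p.map _).snd_mem_support_of_mem_edges he)
  have hwu' : (G.deleteEdges {s(v, w)}).Adj w u := by
    refine deleteEdges_adj.mpr ⟨hwu, ?_⟩
    simp only [Set.mem_singleton_iff, Sym2.eq_iff]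
    rintro (⟨hwv, -⟩ | ⟨-, huv'⟩)
    exacts [hvw.ne hwv.symm, huv huv']
  exact ⟨.cons hwu' ((p.map (.ofLE (G.deleteEdges_le _))).toDeleteEdge _ hp)⟩

theorem Equiv.Perm.SameCycle.rel_of_forall_rel_apply {α : Type*} [Finite α] {σ : Perm α}
    {R : α → α → Prop} (hR : Equivalence R) {a x : α}
    (hstep : ∀ y, σ.SameCycle a y → σ y ≠ a → R y (σ y)) (hax : σ.SameCycle a x) : R a x := by
  obtain ⟨n, rfl⟩ := hax.exists_nat_pow_eq
  clear hax
  induction n with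
  | zero => exact hR.refl a
  | succ n ih =>
    rw [pow_succ', Perm.mul_apply]
    by_cases hret : σ ((σ ^ n) a) = a
    · rw [hret]; exact hR.refl a
    · exact hR.trans ih (hstep _ ⟨n, by simp⟩ hret)

namespace RibbonGraph

variable {V H : Type} (r : RibbonGraph V H)

theorem s_sigma (h : H) : r.s (r.σ h) = r.s h :=
  (r.orbit_fiber _ _).mp (Equiv.Perm.sameCycle_apply_left.mpr .rfl)

theorem underlying_adj (hloop : ∀ h, r.s h ≠ r.s (r.ι h)) (h : H) :
    r.underlying.Adj (r.s h) (r.s (r.ι h)) :=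
  (fromRel_adj _ _ _).mpr ⟨hloop h, .inl ⟨h, rfl, rfl⟩⟩

theorem exists_half_edge_of_adj {v w : V} (hvw : r.underlying.Adj v w) :
    ∃ e, r.s e = v ∧ r.s (r.ι e) = w := by
  obtain ⟨-, he | ⟨e, hw, hv⟩⟩ := (fromRel_adj _ _ _).mp hvw
  exacts [he, ⟨r.ι e, hv, by rwa [r.ι_invol]⟩]

theorem mem_range_s_of_reachable {h : H} {x : V} (hx : r.underlying.Reachable (r.s h) x) :
    x ∈ Set.range r.s := by
  obtain ⟨p⟩ := hx.symm
  cases p with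
  | nil => exact ⟨h, rfl⟩
  | cons hadj _ =>
    obtain ⟨e, he, -⟩ := r.exists_half_edge_of_adj hadj
    exact ⟨e, he⟩

noncomputable def branchSize (h : H) : ℕ :=
  {x | (r.underlying.deleteEdges {s(r.s h, r.s (r.ι h))}).Reachable (r.s (r.ι h)) x}.ncard

theorem mul_apply_ne (hloop : ∀ h, r.s h ≠ r.s (r.ι h)) (h : H) : (r.ι * r.σ) h ≠ h :=
  fun hfix => by
    have hσ : r.σ h = r.ι h := by simpa [r.ι_invol] using congrArg r.ι hfix
    exact hloop h (by rw [← hσ, r.s_sigma])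

variable [Finite H]

theorem branchSize_lt (ht : r.IsTreeRibbon) {h h' : H} (hs : r.s h' = r.s (r.ι h))
    (hne : h' ≠ r.ι h) : r.branchSize h' < r.branchSize h := by
  obtain ⟨htree, hloop, hsimple⟩ := ht
  have hh' : h' ≠ h := by rintro rfl; exact hloop h' hs
  have hback : r.s (r.ι h') ≠ r.s h := fun heq => by
    rcases hsimple h' (r.ι h) hs (by rw [r.ι_invol, heq]) with h1 | h1
    · exact hne h1
    · exact hh' (by rwa [r.ι_invol] at h1)
  have hsub := htree.isAcyclic.reachable_deleteEdges_ssubset (r.underlying_adj hloop h)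
    (hs ▸ r.underlying_adj hloop h') hback
  rw [branchSize, branchSize, hs]
  exact Set.ncard_lt_ncard hsub ((Set.finite_range r.s).subset fun x hx =>
    r.mem_range_s_of_reachable (hx.mono (deleteEdges_le _)))

theorem sameCycle_iota_self (ht : r.IsTreeRibbon) (h : H) :
    (r.ι * r.σ).SameCycle (r.ι h) h := by
  have hlast : (r.ι * r.σ).SameCycle (r.σ.symm (r.ι h)) h :=
    ⟨1, by simp [r.ι_invol]⟩
  refine (Equiv.Perm.SameCycle.rel_of_forall_rel_apply (Equiv.Perm.SameCycle.equivalence _)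
    (fun g hg hne => ?_) (Equiv.Perm.sameCycle_symm_apply_right.mpr .rfl)).trans hlast
  have hs : r.s (r.σ g) = r.s (r.ι h) := by rw [r.s_sigma, ← (r.orbit_fiber _ _).mp hg]
  exact (Equiv.Perm.sameCycle_apply_right.mpr .rfl).trans (sameCycle_iota_self ht (r.σ g))
termination_by r.branchSize h
decreasing_by exact r.branchSize_lt ht hs hne

theorem sameCycle_sigma_self (ht : r.IsTreeRibbon) (h : H) : (r.ι * r.σ).SameCycle h (r.σ h) := by
  have hσ : r.ι ((r.ι * r.σ) h) = r.σ h := r.ι_invol _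
  exact (Equiv.Perm.sameCycle_apply_right.mpr .rfl).trans (hσ ▸ r.sameCycle_iota_self ht _).symm

theorem sameCycle_of_s_eq (ht : r.IsTreeRibbon) {g h : H} (hs : r.s g = r.s h) :
    (r.ι * r.σ).SameCycle g h :=
  Equiv.Perm.SameCycle.rel_of_forall_rel_apply (Equiv.Perm.SameCycle.equivalence _)
    (fun y _ _ => r.sameCycle_sigma_self ht y) ((r.orbit_fiber g h).mpr hs)

theorem sameCycle_of_reachable (ht : r.IsTreeRibbon) {g h : H}
    (hgh : r.underlying.Reachable (r.s g) (r.s h)) : (r.ι * r.σ).SameCycle g h := by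
  suffices ∀ {v w} (p : r.underlying.Walk v w) {g h : H}, r.s g = v → r.s h = w →
      (r.ι * r.σ).SameCycle g h from this hgh.some rfl rfl
  intro v w p
  induction p with
  | nil => exact fun hg hh => r.sameCycle_of_s_eq ht (hg.trans hh.symm)
  | cons hadj _ ih =>
    intro g h hg hh
    obtain ⟨e, he, he'⟩ := r.exists_half_edge_of_adj hadj
    exact ((r.sameCycle_of_s_eq ht (hg.trans he.symm)).trans
      (r.sameCycle_iota_self ht e).symm).trans (ih he' hh)

end RibbonGraph

theorem tree_ribbon_single_green_walk_general {V H : Type} [Fintype H]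
    [DecidableEq H] [Nonempty H]
    (r : RibbonGraph V H) (htree : r.IsTreeRibbon) :
    (r.ι * r.σ).IsCycle ∧ (r.ι * r.σ).support = Finset.univ := by
  obtain ⟨h₀⟩ := ‹Nonempty H›
  refine ⟨⟨h₀, r.mul_apply_ne htree.2.1 h₀, fun h _ => r.sameCycle_of_reachable htree ?_⟩, ?_⟩
  · exact htree.1.connected.preconnected _ _
  · exact Finset.eq_univ_of_forall fun h => Equiv.Perm.mem_support.mpr (r.mul_apply_ne htree.2.1 h)

/-- If the underlying multigraph of a ribbon graph `(V, H, s, ι, σ)` (with at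
least one half-edge) is a tree, then the permutation `ι ∘ σ` of `H` is a single cycle of
length `|H|` (it is a cycle whose support is all of `H`). -/
theorem tree_ribbon_single_green_walk {V H : Type} [Fintype V] [Fintype H]
    [DecidableEq V] [DecidableEq H] [Nonempty H]
    (r : RibbonGraph V H) (htree : r.IsTreeRibbon) :
    (r.ι * r.σ).IsCycle ∧ (r.ι * r.σ).support = Finset.univ :=
  tree_ribbon_single_green_walk_general r htree
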